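/- For l = 2 and m ≥ 3, if δ ≤ r ≤ Δ where δ and Δ are the minimum and maximum degree of P_2[K_{1,m}], then χ_r(P_2[K_{1,m}]) = 2(m+1). -/

import Mathlib

open SimpleGraph

/-- Lexicographic product of simple graphs. -/
def SimpleGraph.lexProd {α β : Type*} (G₁ : SimpleGraph α) (G₂ : SimpleGraph β) :
    SimpleGraph (α × β) where
  Adj x y := G₁.Adj x.1 y.1 ∨ (x.1 = y.1 ∧ G₂.Adj x.2 y.2)
  symm := by
    constructor
    rintro x y (h | ⟨h1, h2⟩)
    · exact Or.inl h.symm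
    · exact Or.inr ⟨h1.symm, h2.symm⟩
  loopless := by
    constructor
    rintro x (h | ⟨-, h⟩)
    · exact G₁.loopless.irrefl _ h
    · exact G₂.loopless.irrefl _ h

/-- `c` is a proper coloring such that each vertex `v` sees at least
`min r (deg v)` distinct colors among its neighbors. -/
def SimpleGraph.IsRDynamicColoring {α : Type*} (G : SimpleGraph α) (r : ℕ) (c : α → ℕ) : Prop :=
  (∀ u v, G.Adj u v → c u ≠ c v) ∧
  ∀ v, min r (G.neighborSet v).ncard ≤ (c '' G.neighborSet v).ncard

/-- The `r`-dynamic chromatic number: least `k` such that there is an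
`r`-dynamic coloring with colors in `{0, …, k-1}`. -/
noncomputable def SimpleGraph.rDynChromaticNumber {α : Type*} (G : SimpleGraph α) (r : ℕ) : ℕ :=
  sInf {k | ∃ c : α → ℕ, G.IsRDynamicColoring r c ∧ ∀ v, c v < k}

/-- Maximum degree (via `Set.ncard` of neighbor sets). -/
noncomputable def SimpleGraph.maxDeg {α : Type*} (G : SimpleGraph α) : ℕ :=
  sSup (Set.range fun v => (G.neighborSet v).ncard)

/-- Minimum degree (via `Set.ncard` of neighbor sets). -/
noncomputable def SimpleGraph.minDeg {α : Type*} (G : SimpleGraph α) : ℕ :=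
  sInf (Set.range fun v => (G.neighborSet v).ncard)

/-- The star `K_{1,m}`: center `0` adjacent to the `m` leaves. -/
def starGraph (m : ℕ) : SimpleGraph (Fin (m + 1)) :=
  SimpleGraph.fromRel (fun i _ => i = 0)

/-- The double star `K_{1,m,m}`: center `0`, middle vertices `1,…,m`,
outer leaf `i + m` attached to middle vertex `i`. -/
def doubleStarGraph (m : ℕ) : SimpleGraph (Fin (2 * m + 1)) :=
  SimpleGraph.fromRel (fun i j =>
    ((i : ℕ) = 0 ∧ 1 ≤ (j : ℕ) ∧ (j : ℕ) ≤ m) ∨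
    (1 ≤ (i : ℕ) ∧ (i : ℕ) ≤ m ∧ (j : ℕ) = (i : ℕ) + m))

/-- The triple star `K_{1,m,m,m}`: center `0`, middle vertices `1,…,m`,
vertex `i + m` attached to `i` for `1 ≤ i ≤ 2m`. -/
def tripleStarGraph (m : ℕ) : SimpleGraph (Fin (3 * m + 1)) :=
  SimpleGraph.fromRel (fun i j =>
    ((i : ℕ) = 0 ∧ 1 ≤ (j : ℕ) ∧ (j : ℕ) ≤ m) ∨
    (1 ≤ (i : ℕ) ∧ (i : ℕ) ≤ 2 * m ∧ (j : ℕ) = (i : ℕ) + m))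

/-! Every vertex of `P₂[K_{1,m}]` has degree at least `m + 2`, with equality at the leaves, so
`r ≥ m + 2`. Two distinct non-adjacent vertices are leaves of the same copy of the star, and a leaf
of the other copy is adjacent to both and has degree `m + 2 ≤ r`, so it must see them in distinct
colours. Hence every `r`-dynamic colouring is injective, and the rainbow colouring is one. -/

namespace SimpleGraph

variable {α : Type*} {G : SimpleGraph α} {r : ℕ} {c : α → ℕ}

theorem isRDynamicColoring_of_injective (G : SimpleGraph α) (r : ℕ) (hc : c.Injective) :
    G.IsRDynamicColoring r c :=
  ⟨fun _ _ hadj h => G.ne_of_adj hadj (hc h),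
    fun _ => (hc.injOn.ncard_image).symm ▸ min_le_right _ _⟩

theorem IsRDynamicColoring.injOn_neighborSet (hc : G.IsRDynamicColoring r c) {w : α}
    (hfin : (G.neighborSet w).Finite) (hr : (G.neighborSet w).ncard ≤ r) :
    Set.InjOn c (G.neighborSet w) := by
  have hsees := hc.2 w
  rw [min_eq_right hr] at hsees
  exact Set.injOn_of_ncard_image_eq (le_antisymm (Set.ncard_image_le hfin) hsees) hfin

theorem IsRDynamicColoring.injective [Finite α] (hc : G.IsRDynamicColoring r c)
    (hcommon : ∀ u v, u ≠ v → ¬G.Adj u v →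
      ∃ w, G.Adj w u ∧ G.Adj w v ∧ (G.neighborSet w).ncard ≤ r) :
    c.Injective := by
  intro u v huv
  by_contra hne
  by_cases hadj : G.Adj u v
  · exact hc.1 u v hadj huv
  obtain ⟨w, hwu, hwv, hw⟩ := hcommon u v hne hadj
  exact hne (hc.injOn_neighborSet (Set.toFinite _) hw hwu hwv huv)

theorem rDynChromaticNumber_eq_card [Finite α]
    (hinj : ∀ c, G.IsRDynamicColoring r c → c.Injective) :
    G.rDynChromaticNumber r = Nat.card α := by
  have hrainbow : Nat.card α ∈ {k | ∃ c : α → ℕ, G.IsRDynamicColoring r c ∧ ∀ v, c v < k} :=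
    ⟨fun v => Finite.equivFin α v,
      G.isRDynamicColoring_of_injective r (Fin.val_injective.comp (Finite.equivFin α).injective),
      fun v => (Finite.equivFin α v).isLt⟩
  refine le_antisymm (Nat.sInf_le hrainbow) (le_csInf ⟨_, hrainbow⟩ ?_)
  rintro k ⟨c, hc, hlt⟩
  simpa using Nat.card_le_card_of_injective (fun v => (⟨c v, hlt v⟩ : Fin k))
    fun u v h => hinj c hc (congrArg Fin.val h)

theorem le_minDeg [Nonempty α] {d : ℕ} (h : ∀ v, d ≤ (G.neighborSet v).ncard) : d ≤ G.minDeg :=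
  le_csInf (Set.range_nonempty _) (by rintro _ ⟨v, rfl⟩; exact h v)

section LexProd

variable {β : Type*} {G₁ : SimpleGraph α} {G₂ : SimpleGraph β}

theorem lexProd_adj {x y : α × β} :
    (G₁.lexProd G₂).Adj x y ↔ G₁.Adj x.1 y.1 ∨ (x.1 = y.1 ∧ G₂.Adj x.2 y.2) :=
  Iff.rfl

theorem lexProd_neighborSet (x : α × β) :
    (G₁.lexProd G₂).neighborSet x =
      G₁.neighborSet x.1 ×ˢ Set.univ ∪ {x.1} ×ˢ G₂.neighborSet x.2 := by
  ext ⟨a, k⟩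
  simp [lexProd_adj, eq_comm]

theorem ncard_neighborSet_lexProd [Finite α] [Finite β] (x : α × β) :
    ((G₁.lexProd G₂).neighborSet x).ncard =
      (G₁.neighborSet x.1).ncard * Nat.card β + (G₂.neighborSet x.2).ncard := by
  have hdisj : Disjoint (G₁.neighborSet x.1 ×ˢ (Set.univ : Set β)) ({x.1} ×ˢ G₂.neighborSet x.2) :=
    Set.disjoint_prod.2 (Or.inl (Set.disjoint_singleton_right.2 G₁.notMem_neighborSet_self))
  rw [lexProd_neighborSet, Set.ncard_union_eq hdisj, Set.ncard_prod, Set.ncard_prod,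
    Set.ncard_univ, Set.ncard_singleton, one_mul]

end LexProd

theorem pathGraph_two_adj {a b : Fin 2} : (pathGraph 2).Adj a b ↔ a ≠ b := by
  rw [pathGraph_two_eq_top, top_adj]

theorem ncard_neighborSet_pathGraph_two (a : Fin 2) :
    ((pathGraph 2).neighborSet a).ncard = 1 := by
  rw [pathGraph_two_eq_top, neighborSet_top, Set.ncard_compl, Set.ncard_singleton, Nat.card_fin]

section Star

variable {V : Type*} {r v : V}

theorem neighborSet_starGraph_of_ne (h : v ≠ r) : (starGraph r).neighborSet v = {r} := by
  ext w
  grind [mem_neighborSet, starGraph_adj]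

theorem neighborSet_starGraph_nonempty [Nontrivial V] (r v : V) :
    ((starGraph r).neighborSet v).Nonempty := by
  by_cases h : v = r
  · obtain ⟨w, hw⟩ := exists_ne r
    exact ⟨w, starGraph_adj.2 ⟨h ▸ hw.symm, Or.inl h⟩⟩
  · exact ⟨r, starGraph_adj.2 ⟨h, Or.inr rfl⟩⟩

end Star

end SimpleGraph

theorem starGraph_eq_starGraph_zero (m : ℕ) : _root_.starGraph m = SimpleGraph.starGraph 0 := rfl

theorem stmt_9_general (m r : ℕ) (hm : 3 ≤ m)
    (hδ : ((SimpleGraph.pathGraph 2).lexProd (_root_.starGraph m)).minDeg ≤ r) :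
    ((SimpleGraph.pathGraph 2).lexProd (_root_.starGraph m)).rDynChromaticNumber r = 2 * (m + 1) := by
  rw [starGraph_eq_starGraph_zero] at hδ ⊢
  set G := (pathGraph 2).lexProd (SimpleGraph.starGraph (0 : Fin (m + 1)))
  have : Nontrivial (Fin (m + 1)) := Fin.nontrivial_iff_two_le.2 (by omega)
  have hone : (1 : Fin (m + 1)) ≠ 0 := Fin.one_eq_zero_iff.not.2 (by omega)
  have hdeg (x : Fin 2 × Fin (m + 1)) :
      (G.neighborSet x).ncard = m + 1 + ((SimpleGraph.starGraph 0).neighborSet x.2).ncard := by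
    rw [ncard_neighborSet_lexProd, ncard_neighborSet_pathGraph_two, Nat.card_fin, one_mul]
  have hleaf (b : Fin 2) : (G.neighborSet (b, 1)).ncard ≤ r := calc
    _ = m + 2 := by rw [hdeg, neighborSet_starGraph_of_ne hone, Set.ncard_singleton]
    _ ≤ G.minDeg := le_minDeg fun x => by
      have := (Set.ncard_pos (Set.toFinite _)).2 (neighborSet_starGraph_nonempty 0 x.2)
      rw [hdeg]
      omega
    _ ≤ r := hδ
  rw [rDynChromaticNumber_eq_card fun c hc => hc.injective ?_]
  · simp [mul_comm]
  have hsucc : ∀ a : Fin 2, a + 1 ≠ a := by decide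
  rintro ⟨a, k⟩ ⟨b, l⟩ - hnadj
  obtain rfl : a = b := by
    by_contra hab
    exact hnadj (Or.inl (pathGraph_two_adj.2 hab))
  have hadj : (pathGraph 2).Adj (a + 1) a := pathGraph_two_adj.2 (hsucc a)
  exact ⟨(a + 1, 1), Or.inl hadj, Or.inl hadj, hleaf _⟩

theorem stmt_9 (m r : ℕ) (hm : 3 ≤ m)
    (hδ : ((SimpleGraph.pathGraph 2).lexProd (_root_.starGraph m)).minDeg ≤ r)
    (hΔ : r ≤ ((SimpleGraph.pathGraph 2).lexProd (_root_.starGraph m)).maxDeg) :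
    ((SimpleGraph.pathGraph 2).lexProd (_root_.starGraph m)).rDynChromaticNumber r = 2 * (m + 1) :=
  stmt_9_general m r hm hδ
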